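/- For every non-trivial connected graph G and every graph H with γ_r2(H) = 2, γ_r2(G ∘ H) = 2γ(G). -/

import Mathlib

open Finset

def SimpleGraph.lexProd {α β : Type*} (G : SimpleGraph α) (H : SimpleGraph β) :
    SimpleGraph (α × β) where
  Adj x y := G.Adj x.1 y.1 ∨ (x.1 = y.1 ∧ H.Adj x.2 y.2)
  symm := by
    constructor
    intro x y h
    rcases h with h | ⟨e, h⟩
    · exact Or.inl h.symm
    · exact Or.inr ⟨e.symm, h.symm⟩
  loopless := by
    constructor
    intro x h
    rcases h with h | ⟨_, h⟩
    · exact G.irrefl h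
    · exact H.irrefl h

/-- `f` is a `k`-rainbow dominating function of `G`. -/
def IsRDF {α : Type*} (G : SimpleGraph α) (k : ℕ) (f : α → Finset (Fin k)) : Prop :=
  ∀ v, f v = ∅ → ∀ i : Fin k, ∃ u, G.Adj u v ∧ i ∈ f u

/-- weight of a labeling -/
def rdWeight {α : Type*} [Fintype α] {k : ℕ} (f : α → Finset (Fin k)) : ℕ :=
  ∑ v, (f v).card

/-- the `k`-rainbow domination number -/
noncomputable def rdNum {α : Type*} (G : SimpleGraph α) [Fintype α] (k : ℕ) : ℕ :=
  sInf {n | ∃ f : α → Finset (Fin k), IsRDF G k f ∧ rdWeight f = n}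

/-- `D` is a dominating set of `G` -/
def IsDom {α : Type*} (G : SimpleGraph α) (D : Set α) : Prop :=
  ∀ v, v ∈ D ∨ ∃ u ∈ D, G.Adj u v

/-- `D` is a total dominating set of `G` -/
def IsTotalDom {α : Type*} (G : SimpleGraph α) (D : Set α) : Prop :=
  ∀ v, ∃ u ∈ D, G.Adj u v

/-- the domination number -/
noncomputable def domNum {α : Type*} (G : SimpleGraph α) [Fintype α] : ℕ :=
  sInf {n | ∃ D : Finset α, IsDom G ↑D ∧ D.card = n}

/-- the total domination number -/
noncomputable def totalDomNum {α : Type*} (G : SimpleGraph α) [Fintype α] : ℕ :=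
  sInf {n | ∃ D : Finset α, IsTotalDom G ↑D ∧ D.card = n}

/-- `(A, B)` is a dominating couple of `G` -/
def IsDomCouple {α : Type*} [DecidableEq α] (G : SimpleGraph α) (A B : Finset α) : Prop :=
  Disjoint A B ∧ ∀ x, x ∉ B → ∃ w ∈ A ∪ B, G.Adj w x

/-!
The labelling `(x, y) ↦ h y` on the fibres over a minimum dominating set `D` of `G`, where `h` is
a 2-rainbow dominating function of `H` of weight 2 using both colours, shows
`γ_r2(G ∘ H) ≤ 2 γ(G)`.

Conversely, let `f` be a `k`-rainbow dominating function of `G ∘ H`. Say the fibre over `x`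
covers colour `i` if some `(x, y)` carries `i`, or if no vertex of the fibre is unlabelled. For
each colour `i` the vertices whose fibre covers `i` dominate `G`: an unlabelled `(x, y)` has a
neighbour carrying `i`, outside its own fibre if that fibre misses `i`. A fibre without unlabelled
vertices is itself a rainbow dominating function of `H`, so the number of colours a fibre covers
is at most its weight as soon as `k ≤ γ_rk(H)`. Summing over colours and fibres gives
`k γ(G) ≤ γ_rk(G ∘ H)`.
-/

section Domination

variable {α : Type*} [Fintype α] (G : SimpleGraph α)

theorem domNum_le_card {D : Finset α} (hD : IsDom G ↑D) : domNum G ≤ D.card :=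
  Nat.sInf_le ⟨D, hD, rfl⟩

theorem exists_isDom_card_eq_domNum : ∃ D : Finset α, IsDom G ↑D ∧ D.card = domNum G :=
  Nat.sInf_mem (s := {n | ∃ D : Finset α, IsDom G ↑D ∧ D.card = n})
    ⟨_, univ, fun v => Or.inl (mem_coe.2 (mem_univ v)), rfl⟩

end Domination

section RainbowDomination

variable {α : Type*} {G : SimpleGraph α} {k : ℕ}

theorem isRDF_of_forall_nonempty {f : α → Finset (Fin k)} (hf : ∀ v, (f v).Nonempty) :
    IsRDF G k f :=
  fun v hv => absurd hv (hf v).ne_empty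

variable [Fintype α]

theorem rdNum_le_rdWeight {f : α → Finset (Fin k)} (hf : IsRDF G k f) : rdNum G k ≤ rdWeight f :=
  Nat.sInf_le ⟨f, hf, rfl⟩

variable (G k) in
theorem exists_isRDF_rdWeight_eq_rdNum :
    ∃ f : α → Finset (Fin k), IsRDF G k f ∧ rdWeight f = rdNum G k :=
  Nat.sInf_mem (s := {n | ∃ f : α → Finset (Fin k), IsRDF G k f ∧ rdWeight f = n})
    ⟨_, fun _ => univ, fun _ hv i => absurd (hv ▸ mem_univ i) (notMem_empty i), rfl⟩

theorem card_le_rdWeight {f : α → Finset (Fin k)} (hf : ∀ v, (f v).Nonempty) :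
    Fintype.card α ≤ rdWeight f :=
  calc Fintype.card α = ∑ _v : α, 1 := by simp
    _ ≤ rdWeight f := sum_le_sum fun v _ => (hf v).card_pos

theorem rdWeight_singleton (c : α → Fin k) : rdWeight (fun v => {c v}) = Fintype.card α := by
  simp [rdWeight]

theorem exists_isRDF_rdWeight_eq_two_of_rdNum_eq_two (hG : rdNum G 2 = 2) :
    ∃ f : α → Finset (Fin 2), IsRDF G 2 f ∧ rdWeight f = 2 ∧ ∀ i, ∃ u, i ∈ f u := by
  obtain ⟨f, hf, hfw⟩ := exists_isRDF_rdWeight_eq_rdNum G 2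
  by_cases hempty : ∃ v, f v = ∅
  · obtain ⟨v, hv⟩ := hempty
    exact ⟨f, hf, hfw.trans hG, fun i => (hf v hv i).imp fun _ hu => hu.2⟩
  -- a minimum labelling without unlabelled vertices forces `|α| = 2`
  push Not at hempty
  have hcard : Fintype.card α = 2 := by
    have hle : Fintype.card α ≤ 2 :=
      (card_le_rdWeight hempty).trans (hfw.trans hG).le
    have hge : 2 ≤ Fintype.card α := hG.symm.le.trans <|
      (rdNum_le_rdWeight (isRDF_of_forall_nonempty fun _ => singleton_nonempty 0)).trans_eq
        (rdWeight_singleton fun _ => 0)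
    omega
  let e := Fintype.equivFinOfCardEq hcard
  exact ⟨fun u => {e u}, isRDF_of_forall_nonempty fun _ => singleton_nonempty _,
    (rdWeight_singleton e).trans hcard, fun i => ⟨e.symm i, by simp⟩⟩

end RainbowDomination

section LexProd

variable {α β : Type*} [Fintype α] [Fintype β] {G : SimpleGraph α} {H : SimpleGraph β} {k : ℕ}

theorem rdWeight_prod (f : α × β → Finset (Fin k)) :
    rdWeight f = ∑ x, rdWeight fun y => f (x, y) :=
  Fintype.sum_prod_type _

variable (G) in
theorem rdNum_lexProd_le {h : β → Finset (Fin k)} (hh : IsRDF H k h) (hcov : ∀ i, ∃ u, i ∈ h u) :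
    rdNum (G.lexProd H) k ≤ domNum G * rdWeight h := by
  classical
  obtain ⟨D, hD, hDcard⟩ := exists_isDom_card_eq_domNum G
  have hrdf : IsRDF (G.lexProd H) k fun p => if p.1 ∈ D then h p.2 else ∅ := by
    rintro ⟨x, y⟩ hxy i
    by_cases hx : x ∈ D
    · simp only [hx, if_true] at hxy
      obtain ⟨u, hadj, hu⟩ := hh y hxy i
      exact ⟨(x, u), Or.inr ⟨rfl, hadj⟩, by simpa [hx] using hu⟩
    · obtain hx' | ⟨d, hd, hadj⟩ := hD x
      · exact absurd hx' hx
      obtain ⟨u, hu⟩ := hcov i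
      exact ⟨(d, u), Or.inl hadj, by simpa [mem_coe.1 hd] using hu⟩
  have hfibre (x : α) : (rdWeight fun y => if x ∈ D then h y else ∅) =
      if x ∈ D then rdWeight h else 0 := by
    split_ifs <;> simp [rdWeight]
  refine (rdNum_le_rdWeight hrdf).trans_eq ?_
  rw [rdWeight_prod]
  simp only [hfibre]
  rw [sum_ite_mem, univ_inter, sum_const, smul_eq_mul, hDcard]

open Classical in
noncomputable def coveredColors (g : β → Finset (Fin k)) : Finset (Fin k) :=
  if ∀ y, (g y).Nonempty then univ else univ.biUnion g

theorem mem_coveredColors_of_mem {g : β → Finset (Fin k)} {i : Fin k} {y : β} (hi : i ∈ g y) :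
    i ∈ coveredColors g := by
  unfold coveredColors
  split_ifs
  exacts [mem_univ i, mem_biUnion.2 ⟨y, mem_univ y, hi⟩]

theorem card_coveredColors_le_rdWeight (hk : k ≤ rdNum H k) (g : β → Finset (Fin k)) :
    (coveredColors g).card ≤ rdWeight g := by
  unfold coveredColors
  split_ifs with hg
  · simpa using hk.trans (rdNum_le_rdWeight (isRDF_of_forall_nonempty hg))
  · exact card_biUnion_le

theorem isDom_filter_mem_coveredColors {f : α × β → Finset (Fin k)} (hf : IsRDF (G.lexProd H) k f)
    (i : Fin k) : IsDom G ↑(univ.filter fun x => i ∈ coveredColors fun y => f (x, y)) := by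
  intro x
  by_cases hx : i ∈ coveredColors fun y => f (x, y)
  · exact Or.inl (by simpa using hx)
  have hempty : ¬ ∀ y, (f (x, y)).Nonempty := fun h => hx (by simp [coveredColors, h])
  push Not at hempty
  obtain ⟨y, hy⟩ := hempty
  obtain ⟨⟨u, v⟩, hadj, hi⟩ := hf (x, y) hy i
  have hu : i ∈ coveredColors fun y => f (u, y) := mem_coveredColors_of_mem (y := v) hi
  rcases hadj with hadj | ⟨rfl, -⟩
  · exact Or.inr ⟨u, by simpa using hu, hadj⟩
  · exact absurd hu hx

variable (G) in
theorem mul_domNum_le_rdNum_lexProd (hk : k ≤ rdNum H k) :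
    k * domNum G ≤ rdNum (G.lexProd H) k := by
  obtain ⟨f, hf, hfw⟩ := exists_isRDF_rdWeight_eq_rdNum (G.lexProd H) k
  let C x := coveredColors fun y => f (x, y)
  calc k * domNum G = ∑ _i : Fin k, domNum G := by simp
    _ ≤ ∑ i, (univ.filter fun x => i ∈ C x).card :=
      sum_le_sum fun i _ => domNum_le_card G (isDom_filter_mem_coveredColors hf i)
    _ = ∑ x, (C x).card := by
      simpa [bipartiteAbove, bipartiteBelow] using
        (sum_card_bipartiteAbove_eq_sum_card_bipartiteBelow (s := univ) (t := univ)
          (r := fun x i => i ∈ C x)).symm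
    _ ≤ ∑ x, rdWeight fun y => f (x, y) :=
      sum_le_sum fun x _ => card_coveredColors_le_rdWeight hk _
    _ = rdNum (G.lexProd H) k := by rw [← rdWeight_prod, hfw]

end LexProd

theorem stmt11_general {α β : Type*} [Fintype α] [Fintype β]
    (G : SimpleGraph α) (H : SimpleGraph β)
    (hH : rdNum H 2 = 2) :
    rdNum (G.lexProd H) 2 = 2 * domNum G := by
  obtain ⟨h, hh, hhw, hcov⟩ := exists_isRDF_rdWeight_eq_two_of_rdNum_eq_two hH
  refine le_antisymm ?_ (mul_domNum_le_rdNum_lexProd G hH.ge)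
  calc rdNum (G.lexProd H) 2 ≤ domNum G * rdWeight h := rdNum_lexProd_le G hh hcov
    _ = 2 * domNum G := by rw [hhw, mul_comm]

theorem stmt11 {α β : Type*} [Fintype α] [Fintype β]
    (G : SimpleGraph α) (H : SimpleGraph β)
    (hGc : G.Connected) (hG : Nontrivial α) (hH : rdNum H 2 = 2) :
    rdNum (G.lexProd H) 2 = 2 * domNum G :=
  stmt11_general G H hH
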